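/- Let 𝔄 be a von Neumann algebra on a complex Hilbert space H and let q_1, …, q_n be projections in 𝔄 such that for each i with 2 ≤ i ≤ n, the closed subspace spanned by range q_1, …, range q_{i−1} intersects range q_i trivially. For each i let s_i ∈ 𝔄 be the orthogonal projection onto the closed subspace spanned by range q_1, …, range q_i, and define p_1 = q_1 and p_i = s_i − s_{i−1} for 2 ≤ i ≤ n. Then each p_i is a projection belonging to 𝔄, the p_i are pairwise orthogonal (p_i p_j = 0 for i ≠ j), ∑_{i} p_i = s_n, and if every q_i is a minimal projection in 𝔄 then every p_i is a minimal projection in 𝔄. -/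

import Mathlib

variable {H : Type*} [NormedAddCommGroup H] [InnerProductSpace ℂ H] [CompleteSpace H]

/-- A projection on a Hilbert space: a self-adjoint idempotent bounded operator. -/
def IsProjectionCLM (p : H →L[ℂ] H) : Prop := IsSelfAdjoint p ∧ IsIdempotentElem p

/-- A minimal projection of a von Neumann algebra `𝔄`: a nonzero projection `p ∈ 𝔄` such that
every projection `e ∈ 𝔄` whose range is contained in the range of `p` is `0` or `p`. -/
def IsMinimalProjectionIn (𝔄 : VonNeumannAlgebra H) (p : H →L[ℂ] H) : Prop :=
  IsProjectionCLM p ∧ p ∈ 𝔄 ∧ p ≠ 0 ∧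
    ∀ e : H →L[ℂ] H, IsProjectionCLM e → e ∈ 𝔄 →
      LinearMap.range (e : H →ₗ[ℂ] H) ≤ LinearMap.range (p : H →ₗ[ℂ] H) → e = 0 ∨ e = p

/-!
The first three claims hold for any chain `0 ≤ s₀ ≤ s₁ ≤ ⋯` of projections in a C⋆-algebra:
consecutive differences are projections, differences over disjoint intervals multiply to zero,
and their sum telescopes.

Minimality rests on the fact that a minimal projection `Q` of a von Neumann algebra `𝔄` has a
scalar corner, `Q𝔄Q = ℂQ`. Range projections of elements of `𝔄` lie in `𝔄`, so every nonzero
`d ∈ Q𝔄` has dense range in `range Q` and `Q𝔄Q` has no zero divisors; by the functional calculus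
a self-adjoint element of `Q𝔄Q` then has at most one nonzero spectral value, hence is a real
multiple of `Q`. For `P = sᵢ - sᵢ₋₁` and `Q = qᵢ` the range of `PQ` is dense in `range P`, so
`QPQ = μQ` forces `PQP = μP` with `μ ≠ 0`, and `μ² PaP = PQ(PaP)QP ∈ ℂP`: `P` has a scalar
corner too, which makes it minimal.
-/

open ContinuousLinearMap
open scoped ComplexStarModule

section Operator

variable {𝕜 E : Type*} [NontriviallyNormedField 𝕜] [NormedAddCommGroup E] [NormedSpace 𝕜 E]

theorem ContinuousLinearMap.eq_zero_of_mul_eq_zero_of_range_le {X T P : E →L[𝕜] E}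
    (hXT : X * T = 0) (hXP : X * P = X) (hP : P.range ≤ T.range.topologicalClosure) : X = 0 := by
  have hker : T.range.topologicalClosure ≤ X.ker :=
    Submodule.topologicalClosure_minimal _ (by rintro _ ⟨x, rfl⟩; exact congr($hXT x))
      X.isClosed_ker
  ext x
  rw [← hXP]
  exact hker (hP ⟨x, rfl⟩)

theorem ContinuousLinearMap.range_le_closure_range_mul {P S S' Q : E →L[𝕜] E}
    (hPS : P * S = P) (hPS' : P * S' = 0)
    (hS : S.range ≤ (S'.range ⊔ Q.range).topologicalClosure) :
    P.range ≤ (P * Q).range.topologicalClosure := by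
  have hspan : (S'.range ⊔ Q.range).topologicalClosure ≤
      (P * Q).range.topologicalClosure.comap (P : E →ₗ[𝕜] E) := by
    refine Submodule.topologicalClosure_minimal _ (sup_le ?_ ?_)
      ((Submodule.isClosed_topologicalClosure _).preimage P.continuous)
    · rintro _ ⟨x, rfl⟩
      have : P (S' x) = 0 := congr($hPS' x)
      simp [this]
    · rintro _ ⟨x, rfl⟩
      exact Submodule.le_topologicalClosure _ ⟨x, rfl⟩
  rintro _ ⟨x, rfl⟩
  have : P x = P (S x) := congr($hPS.symm x)
  rw [ContinuousLinearMap.coe_coe, this]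
  exact hspan (hS ⟨x, rfl⟩)

theorem Submodule.topologicalClosure_sup_topologicalClosure_left (U V : Submodule 𝕜 E) :
    (U.topologicalClosure ⊔ V).topologicalClosure = (U ⊔ V).topologicalClosure :=
  le_antisymm
    (Submodule.topologicalClosure_minimal _
      (sup_le (Submodule.topologicalClosure_mono le_sup_left)
        (le_sup_right.trans (Submodule.le_topologicalClosure _)))
      (Submodule.isClosed_topologicalClosure _))
    (Submodule.topologicalClosure_mono (sup_le_sup_right (Submodule.le_topologicalClosure _) _))

theorem Submodule.topologicalClosure_iSup_le_succ (R : ℕ → Submodule 𝕜 E) (k : ℕ) :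
    (⨆ j, ⨆ _ : j ≤ k + 1, R j).topologicalClosure =
      ((⨆ j, ⨆ _ : j ≤ k, R j).topologicalClosure ⊔ R (k + 1)).topologicalClosure := by
  rw [Nat.iSup_le_succ, Submodule.topologicalClosure_sup_topologicalClosure_left]

end Operator

section StarProjectionChain

variable {A : Type*} [NonUnitalCStarAlgebra A] [PartialOrder A] [StarOrderedRing A]

theorem IsStarProjection.sub_mul_sub_eq_zero {a b c d : A} (ha : IsStarProjection a)
    (hb : IsStarProjection b) (hc : IsStarProjection c) (hd : IsStarProjection d)
    (hab : a ≤ b) (hbc : b ≤ c) (hcd : c ≤ d) : (b - a) * (d - c) = 0 := by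
  rw [mul_sub, sub_mul, sub_mul, (hb.le_iff_mul_eq_left hd).mp (hbc.trans hcd),
    (hb.le_iff_mul_eq_left hc).mp hbc, (ha.le_iff_mul_eq_left hd).mp (hab.trans hbc |>.trans hcd),
    (ha.le_iff_mul_eq_left hc).mp (hab.trans hbc), sub_self]

theorem IsStarProjection.sub_succ_mul_sub_succ_eq_zero {t : ℕ → A} {n : ℕ}
    (ht : ∀ i ≤ n, IsStarProjection (t i)) (hmono : ∀ i j, i ≤ j → j ≤ n → t i ≤ t j)
    {i j : ℕ} (hi : i < n) (hj : j < n) (hij : i ≠ j) :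
    (t (i + 1) - t i) * (t (j + 1) - t j) = 0 := by
  wlog hlt : i < j generalizing i j
  · have hsa (k : ℕ) (hk : k < n) : IsSelfAdjoint (t (k + 1) - t k) :=
      (ht _ hk).isSelfAdjoint.sub (ht _ hk.le).isSelfAdjoint
    simpa [(hsa i hi).star_eq, (hsa j hj).star_eq] using
      congr(star $(this hj hi hij.symm (by omega)))
  exact IsStarProjection.sub_mul_sub_eq_zero (ht _ hi.le) (ht _ hi) (ht _ hj.le) (ht _ hj)
    (hmono _ _ (by omega) (by omega)) (hmono _ _ hlt hj.le) (hmono _ _ (by omega) hj)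

theorem IsStarProjection.orthogonal_decomposition_of_chain {s p : ℕ → A} {n : ℕ} (hn : 0 < n)
    (hs : ∀ i < n, IsStarProjection (s i)) (hmono : ∀ j i, j ≤ i → i < n → s j ≤ s i)
    (hp0 : p 0 = s 0) (hp : ∀ k, k + 1 < n → p (k + 1) = s (k + 1) - s k) :
    (∀ i < n, IsStarProjection (p i)) ∧ (∀ i < n, ∀ j < n, i ≠ j → p i * p j = 0) ∧
      ∑ i ∈ Finset.range n, p i = s (n - 1) := by
  set t : ℕ → A := fun i => Nat.casesOn i 0 s
  have ht : ∀ i ≤ n, IsStarProjection (t i) := by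
    rintro (_ | i) hi
    exacts [IsStarProjection.zero A, hs i hi]
  have ht_mono : ∀ i j, i ≤ j → j ≤ n → t i ≤ t j := by
    rintro (_ | i) (_ | j) hij hj
    · exact le_rfl
    · exact (hs j hj).nonneg
    · omega
    · exact hmono i j (by omega) hj
  have hpt : ∀ i < n, p i = t (i + 1) - t i := by
    rintro (_ | k) hk
    exacts [hp0.trans (sub_zero _).symm, hp k hk]
  refine ⟨fun i hi => ?_, fun i hi j hj hij => ?_, ?_⟩
  · rw [hpt i hi]
    exact ((ht i hi.le).le_iff_sub (ht _ hi)).mp (ht_mono _ _ i.le_succ hi)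
  · rw [hpt i hi, hpt j hj]
    exact sub_succ_mul_sub_succ_eq_zero ht ht_mono hi hj hij
  · rw [Finset.sum_congr rfl fun i hi => hpt i (Finset.mem_range.mp hi), Finset.sum_range_sub]
    obtain ⟨k, rfl⟩ := Nat.exists_eq_add_one_of_ne_zero hn.ne'
    simp [t]

end StarProjectionChain

theorem IsSelfAdjoint.mul_eq_self_of_mul_eq_self {R : Type*} [Mul R] [StarMul R] {a b : R}
    (ha : IsSelfAdjoint a) (hb : IsSelfAdjoint b) (h : b * a = b) : a * b = b := by
  simpa [ha.star_eq, hb.star_eq] using congr(star $h)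

theorem isProjectionCLM_iff {p : H →L[ℂ] H} : IsProjectionCLM p ↔ IsStarProjection p :=
  ⟨fun h => ⟨h.2, h.1⟩, fun h => ⟨h.2, h.1⟩⟩

theorem IsStarProjection.le_iff_range_le {e f : H →L[ℂ] H} (he : IsStarProjection e)
    (hf : IsStarProjection f) : e ≤ f ↔ e.range ≤ f.range := by
  obtain ⟨_, he'⟩ := isStarProjection_iff_eq_starProjection_range.mp he
  obtain ⟨_, hf'⟩ := isStarProjection_iff_eq_starProjection_range.mp hf
  conv_lhs => rw [he', hf']
  exact Submodule.starProjection_le_starProjection_iff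

namespace VonNeumannAlgebra

variable (𝔄 : VonNeumannAlgebra H)

theorem cfc_mem {b : H →L[ℂ] H} (hb : b ∈ 𝔄) (f : ℝ → ℝ) : cfc f b ∈ 𝔄 := by
  rw [← 𝔄.commutant_commutant, mem_commutant_iff]
  exact fun y hy => (Commute.cfc_real (mem_commutant_iff.mp hy b hb) f).symm

theorem starProjection_topologicalClosure_range_mem {b : H →L[ℂ] H} (hb : b ∈ 𝔄) :
    b.range.topologicalClosure.starProjection ∈ 𝔄 := by
  rw [IsStarProjection.mem_iff isStarProjection_starProjection]
  intro y hy
  rw [Submodule.range_starProjection, Module.End.mem_invtSubmodule]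
  refine Submodule.topologicalClosure_minimal _ ?_
    ((Submodule.isClosed_topologicalClosure _).preimage y.continuous)
  rintro _ ⟨x, rfl⟩
  exact Submodule.le_topologicalClosure _ ⟨y x, congr($(mem_commutant_iff.mp hy b hb) x)⟩

end VonNeumannAlgebra

def HasScalarCorner (𝔄 : VonNeumannAlgebra H) (P : H →L[ℂ] H) : Prop :=
  ∀ a ∈ 𝔄, ∃ c : ℂ, P * a * P = c • P

namespace IsMinimalProjectionIn

variable {𝔄 : VonNeumannAlgebra H} {Q : H →L[ℂ] H}

theorem isStarProjection (hQ : IsMinimalProjectionIn 𝔄 Q) : IsStarProjection Q :=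
  isProjectionCLM_iff.mp hQ.1

theorem topologicalClosure_range_eq (hQ : IsMinimalProjectionIn 𝔄 Q) {d : H →L[ℂ] H}
    (hd : d ∈ 𝔄) (hd0 : d ≠ 0) (hQd : Q * d = d) : d.range.topologicalClosure = Q.range := by
  set K := d.range.topologicalClosure
  have hKQ : K ≤ Q.range := by
    refine Submodule.topologicalClosure_minimal _ ?_
      hQ.isStarProjection.isIdempotentElem.isClosed_range
    rw [← hQd]
    exact LinearMap.range_comp_le_range _ _
  have hK0 : K.starProjection ≠ 0 := by
    intro h
    have hd_bot : d.range ≤ ⊥ := by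
      calc d.range ≤ K := Submodule.le_topologicalClosure _
        _ = ⊥ := by rw [← Submodule.range_starProjection K, h]; exact LinearMap.range_zero
    exact hd0 (ContinuousLinearMap.coe_injective (LinearMap.range_eq_bot.mp (le_bot_iff.mp hd_bot)))
  obtain h | h := hQ.2.2.2 _ (isProjectionCLM_iff.mpr isStarProjection_starProjection)
    (𝔄.starProjection_topologicalClosure_range_mem hd) (by rwa [Submodule.range_starProjection])
  · exact absurd h hK0
  · rw [← Submodule.range_starProjection K, h]

theorem eq_zero_or_eq_zero_of_mul_eq_zero (hQ : IsMinimalProjectionIn 𝔄 Q) {c d : H →L[ℂ] H}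
    (hcQ : c * Q = c) (hd : d ∈ 𝔄) (hQd : Q * d = d) (hcd : c * d = 0) : c = 0 ∨ d = 0 := by
  by_cases hd0 : d = 0
  · exact .inr hd0
  · exact .inl (eq_zero_of_mul_eq_zero_of_range_le hcd hcQ
      (hQ.topologicalClosure_range_eq hd hd0 hQd).ge)


theorem eq_of_mem_spectrum (hQ : IsMinimalProjectionIn 𝔄 Q) {b : H →L[ℂ] H} (hb : b ∈ 𝔄)
    (hbsa : IsSelfAdjoint b) (hbQ : b * Q = b) {l₁ l₂ : ℝ} (h₁ : l₁ ∈ spectrum ℝ b)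
    (h₂ : l₂ ∈ spectrum ℝ b) (hl₁ : l₁ ≠ 0) (hl₂ : l₂ ≠ 0) : l₁ = l₂ := by
  by_contra hne
  wlog hlt : l₂ < l₁ generalizing l₁ l₂
  · exact this h₂ h₁ hl₂ hl₁ (Ne.symm hne) (lt_of_le_of_ne (not_lt.mp hlt) hne)
  -- Ramps on either side of the midpoint give two nonzero elements of `Q𝔄Q` with product `0`.
  set m := (l₁ + l₂) / 2
  have hm₁ : m < l₁ := by simp only [m]; linarith
  have hm₂ : l₂ < m := by simp only [m]; linarith
  set g₁ : ℝ → ℝ := fun t => max (t - m) 0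
  set g₂ : ℝ → ℝ := fun t => max (m - t) 0
  have hg : ∀ t, g₁ t * g₂ t = 0 := fun t => by
    rcases le_total t m with h | h <;> simp [g₁, g₂, h]
  have hcfc (g : ℝ → ℝ) (hg : Continuous g) : cfc (fun t => t * g t) b = b * cfc g b := by
    rw [cfc_mul (fun t => t) g b, cfc_id' ℝ b]
  have hne0 (g : ℝ → ℝ) (hg : Continuous g) {l : ℝ} (hl : l ∈ spectrum ℝ b)
      (hgl : l * g l ≠ 0) : b * cfc g b ≠ 0 := by
    rw [← hcfc g hg]
    intro h
    have hzero := eqOn_of_cfc_eq_cfc (h.trans (cfc_zero ℝ b).symm)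
    exact hgl (hzero hl)
  have hQb := hQ.isStarProjection.isSelfAdjoint.mul_eq_self_of_mul_eq_self hbsa hbQ
  have hcomm (g : ℝ → ℝ) : Commute (cfc g b) b := (Commute.refl b).cfc_real g
  obtain h | h := hQ.eq_zero_or_eq_zero_of_mul_eq_zero (c := b * cfc g₁ b) (d := b * cfc g₂ b)
    (by rw [(hcomm g₁).eq.symm, mul_assoc, hbQ]) (mul_mem hb (𝔄.cfc_mem hb g₂))
    (by rw [← mul_assoc, hQb]) (by
      rw [mul_assoc, ← mul_assoc (cfc g₁ b), (hcomm g₁).eq, mul_assoc, ← cfc_mul g₁ g₂ b]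
      simp [hg, cfc_const_zero])
  · exact hne0 g₁ (by fun_prop) h₁ (mul_ne_zero hl₁ (lt_max_of_lt_left (by linarith)).ne') h
  · exact hne0 g₂ (by fun_prop) h₂ (mul_ne_zero hl₂ (lt_max_of_lt_left (by linarith)).ne') h

theorem exists_eq_smul_of_isSelfAdjoint (hQ : IsMinimalProjectionIn 𝔄 Q) {b : H →L[ℂ] H}
    (hb : b ∈ 𝔄) (hbsa : IsSelfAdjoint b) (hbQ : b * Q = b) : ∃ r : ℝ, b = r • Q := by
  have hQb := hQ.isStarProjection.isSelfAdjoint.mul_eq_self_of_mul_eq_self hbsa hbQ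
  obtain ⟨l, hl⟩ : ∃ l : ℝ, ∀ t ∈ spectrum ℝ b, t * (t - l) = 0 := by
    by_cases h : ∃ l ∈ spectrum ℝ b, l ≠ 0
    · obtain ⟨l, hl, hl0⟩ := h
      refine ⟨l, fun t ht => ?_⟩
      rcases eq_or_ne t 0 with rfl | ht0
      · simp
      · simp [hQ.eq_of_mem_spectrum hb hbsa hbQ ht hl ht0 hl0]
    · push Not at h
      exact ⟨0, fun t ht => by simp [h t ht]⟩
  have hprod : b * (b - l • Q) = 0 := by
    calc b * (b - l • Q) = cfc (fun t => t * (t - l)) b := by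
          rw [cfc_mul (fun t => t) (fun t => t - l) b, cfc_sub (fun t => t) (fun _ => l) b,
            cfc_id' ℝ b, cfc_const l b, mul_sub, mul_sub, Algebra.algebraMap_eq_smul_one,
            mul_smul_comm, mul_smul_comm, hbQ, mul_one]
      _ = 0 := by rw [cfc_congr hl, cfc_const_zero]
  have hlQ : l • Q ∈ 𝔄 := by
    rw [← Complex.coe_smul]
    exact 𝔄.toStarSubalgebra.smul_mem hQ.2.1 _
  obtain h | h := hQ.eq_zero_or_eq_zero_of_mul_eq_zero hbQ (sub_mem hb hlQ)
    (by rw [mul_sub, hQb, mul_smul_comm, hQ.isStarProjection.isIdempotentElem.eq]) hprod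
  · exact ⟨0, by simp [h]⟩
  · exact ⟨l, sub_eq_zero.mp h⟩

theorem hasScalarCorner (hQ : IsMinimalProjectionIn 𝔄 Q) : HasScalarCorner 𝔄 Q := by
  have hQsa := hQ.isStarProjection.isSelfAdjoint
  have hcorner (b : H →L[ℂ] H) (hb : b ∈ 𝔄) (hbsa : IsSelfAdjoint b) :
      ∃ r : ℝ, Q * b * Q = r • Q :=
    hQ.exists_eq_smul_of_isSelfAdjoint (mul_mem (mul_mem hQ.2.1 hb) hQ.2.1)
      (by simpa [hQsa.star_eq] using hbsa.conjugate Q)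
      (by rw [mul_assoc, hQ.isStarProjection.isIdempotentElem.eq])
  intro a ha
  obtain ⟨r₁, h₁⟩ := hcorner (ℜ a) (by
    rw [realPart_apply_coe]; exact 𝔄.toStarSubalgebra.smul_mem (add_mem ha (star_mem ha)) _)
    (ℜ a).2
  obtain ⟨r₂, h₂⟩ := hcorner (ℑ a) (by
    rw [imaginaryPart_apply_coe]
    exact 𝔄.toStarSubalgebra.smul_mem
      (𝔄.toStarSubalgebra.smul_mem (sub_mem ha (star_mem ha)) _) _)
    (ℑ a).2
  refine ⟨r₁ + Complex.I * r₂, ?_⟩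
  conv_lhs => rw [← realPart_add_I_smul_imaginaryPart a]
  rw [mul_add, add_mul, mul_smul_comm, smul_mul_assoc, h₁, h₂, ← Complex.coe_smul,
    ← Complex.coe_smul, smul_smul, ← add_smul]

end IsMinimalProjectionIn

section ScalarCorner

variable {𝔄 : VonNeumannAlgebra H}

theorem isMinimalProjectionIn_of_hasScalarCorner {P : H →L[ℂ] H} (hP : IsStarProjection P)
    (hP𝔄 : P ∈ 𝔄) (hP0 : P ≠ 0) (hcorner : HasScalarCorner 𝔄 P) :
    IsMinimalProjectionIn 𝔄 P := by
  refine ⟨isProjectionCLM_iff.mpr hP, hP𝔄, hP0, fun e he he𝔄 hle => ?_⟩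
  rw [isProjectionCLM_iff] at he
  have heP : e ≤ P := (he.le_iff_range_le hP).mpr hle
  obtain ⟨c, hc⟩ := hcorner e he𝔄
  rw [(he.le_iff_mul_eq_right hP).mp heP, (he.le_iff_mul_eq_left hP).mp heP] at hc
  have hidem := he.isIdempotentElem.eq
  rw [hc, smul_mul_smul_comm, hP.isIdempotentElem.eq] at hidem
  have hc01 : c * (c - 1) = 0 := by
    have h : (c * c - c) • P = 0 := by rw [sub_smul, hidem, sub_self]
    linear_combination (smul_eq_zero.mp h).resolve_right hP0
  rcases mul_eq_zero.mp hc01 with h | h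
  · exact .inl (by rw [hc, h, zero_smul])
  · exact .inr (by rw [hc, sub_eq_zero.mp h, one_smul])

theorem HasScalarCorner.of_range_le {P Q : H →L[ℂ] H} (hQ : HasScalarCorner 𝔄 Q)
    (hP : IsStarProjection P) (hQp : IsStarProjection Q) (hP𝔄 : P ∈ 𝔄) (hP0 : P ≠ 0)
    (hdense : P.range ≤ (P * Q).range.topologicalClosure) : HasScalarCorner 𝔄 P := by
  have hPP := hP.isIdempotentElem.eq
  obtain ⟨μ, hμ⟩ := hQ P hP𝔄
  -- `QPQ = μQ` says that `PQ` is `√μ` times an isometry on `range Q`; its range is dense in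
  -- `range P`, so `PQP = μP`.
  have hPQP : P * Q * P = μ • P := by
    refine sub_eq_zero.mp (eq_zero_of_mul_eq_zero_of_range_le (T := P * Q) ?_ ?_ hdense)
    · calc (P * Q * P - μ • P) * (P * Q) = P * Q * (P * P) * Q - μ • (P * P * Q) := by
            noncomm_ring
        _ = P * (Q * P * Q) - μ • (P * Q) := by rw [hPP]; noncomm_ring
        _ = 0 := by rw [hμ, mul_smul_comm, sub_self]
    · rw [sub_mul, smul_mul_assoc, hPP, mul_assoc, hPP]
  have hμ0 : μ ≠ 0 := by
    rintro rfl
    have hPQ : P * Q = 0 := by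
      rw [← CStarRing.star_mul_self_eq_zero_iff, star_mul, hP.isSelfAdjoint.star_eq,
        hQp.isSelfAdjoint.star_eq, ← mul_assoc, mul_assoc Q, hPP, hμ, zero_smul]
    exact hP0 (eq_zero_of_mul_eq_zero_of_range_le (by rw [← mul_assoc, hPP, hPQ]) hPP hdense)
  intro a ha
  obtain ⟨l, hl⟩ := hQ (P * a * P) (mul_mem (mul_mem hP𝔄 ha) hP𝔄)
  have hsq : μ ^ 2 • (P * a * P) = (l * μ) • P := by
    calc μ ^ 2 • (P * a * P) = (P * Q * P) * a * (P * Q * P) := by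
          rw [hPQP]
          simp only [smul_mul_assoc, mul_smul_comm, smul_smul, sq]
      _ = P * (Q * (P * a * P) * Q) * P := by noncomm_ring
      _ = (l * μ) • P := by
          rw [hl, mul_smul_comm, smul_mul_assoc, hPQP, smul_smul]
  refine ⟨l / μ, ?_⟩
  calc P * a * P = (μ ^ 2)⁻¹ • (μ ^ 2 • (P * a * P)) := by
        rw [smul_smul, inv_mul_cancel₀ (pow_ne_zero 2 hμ0), one_smul]
    _ = (l / μ) • P := by rw [hsq, smul_smul]; congr 1; field_simp

theorem IsMinimalProjectionIn.sub {Q S S' : H →L[ℂ] H} (hQ : IsMinimalProjectionIn 𝔄 Q)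
    (hS : IsStarProjection S) (hS' : IsStarProjection S') (hS𝔄 : S ∈ 𝔄) (hS'𝔄 : S' ∈ 𝔄)
    (hspan : S.range = (S'.range ⊔ Q.range).topologicalClosure)
    (hdisj : S'.range ⊓ Q.range = ⊥) : IsMinimalProjectionIn 𝔄 (S - S') := by
  have hle (U : Submodule ℂ H) (hU : U ≤ S'.range ⊔ Q.range) : U ≤ S.range :=
    hspan ▸ hU.trans (Submodule.le_topologicalClosure _)
  have hS'S : S' ≤ S := (hS'.le_iff_range_le hS).mpr (hle _ le_sup_left)
  have hP0 : S - S' ≠ 0 := by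
    intro h
    rw [sub_eq_zero.mp h] at hle
    have hQ0 : Q.range = ⊥ := by rw [← inf_eq_right.mpr (hle _ le_sup_right), hdisj]
    exact hQ.2.2.1 (ContinuousLinearMap.coe_injective (LinearMap.range_eq_bot.mp hQ0))
  refine isMinimalProjectionIn_of_hasScalarCorner ((hS'.le_iff_sub hS).mp hS'S)
    (sub_mem hS𝔄 hS'𝔄) hP0 (hQ.hasScalarCorner.of_range_le ((hS'.le_iff_sub hS).mp hS'S)
      hQ.isStarProjection (sub_mem hS𝔄 hS'𝔄) hP0 (range_le_closure_range_mul ?_ ?_ hspan.le))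
  · rw [sub_mul, hS.isIdempotentElem.eq, (hS'.le_iff_mul_eq_left hS).mp hS'S]
  · rw [sub_mul, (hS'.le_iff_mul_eq_right hS).mp hS'S, hS'.isIdempotentElem.eq, sub_self]

end ScalarCorner

/-- Let `q 0, …, q (n-1)` be projections in a von Neumann algebra `𝔄` such that for each
`i ≥ 1` the closed subspace spanned by `range (q 0), …, range (q (i-1))` meets `range (q i)`
trivially.  Let `s i ∈ 𝔄` be the orthogonal projection onto the closed subspace spanned by
`range (q 0), …, range (q i)`, and let `p 0 = q 0`, `p i = s i - s (i-1)` for `i ≥ 1`.  Then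
the `p i` are pairwise orthogonal projections of `𝔄` with `∑ p i = s (n-1)`, and if every
`q i` is a minimal projection of `𝔄` then so is every `p i`. -/
theorem orthogonalize_minimal_projections
    (𝔄 : VonNeumannAlgebra H) (n : ℕ) (hn : 0 < n)
    (q s p : ℕ → (H →L[ℂ] H))
    (hq : ∀ i < n, IsProjectionCLM (q i) ∧ q i ∈ 𝔄)
    (hdisj : ∀ i, 0 < i → i < n →
      (⨆ j : ℕ, ⨆ _ : j < i, LinearMap.range (q j : H →ₗ[ℂ] H)).topologicalClosure ⊓
        LinearMap.range (q i : H →ₗ[ℂ] H) = ⊥)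
    (hs : ∀ i < n, IsProjectionCLM (s i) ∧ s i ∈ 𝔄 ∧
      LinearMap.range (s i : H →ₗ[ℂ] H)
        = (⨆ j : ℕ, ⨆ _ : j ≤ i, LinearMap.range (q j : H →ₗ[ℂ] H)).topologicalClosure)
    (hp0 : p 0 = q 0)
    (hpi : ∀ i, 0 < i → i < n → p i = s i - s (i - 1)) :
    (∀ i < n, IsProjectionCLM (p i) ∧ p i ∈ 𝔄) ∧
    (∀ i < n, ∀ j < n, i ≠ j → p i * p j = 0) ∧
    (∑ i ∈ Finset.range n, p i) = s (n - 1) ∧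
    ((∀ i < n, IsMinimalProjectionIn 𝔄 (q i)) →
      ∀ i < n, IsMinimalProjectionIn 𝔄 (p i)) := by
  have hsP (i : ℕ) (hi : i < n) : IsStarProjection (s i) := isProjectionCLM_iff.mp (hs i hi).1
  have hs_mono (j i : ℕ) (hji : j ≤ i) (hi : i < n) : s j ≤ s i := by
    rw [(hsP j (hji.trans_lt hi)).le_iff_range_le (hsP i hi), (hs j (hji.trans_lt hi)).2.2,
      (hs i hi).2.2]
    exact Submodule.topologicalClosure_mono (biSup_mono fun k hk => hk.trans hji)
  have hs0 : s 0 = q 0 := by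
    have hq0 := isProjectionCLM_iff.mp (hq 0 hn).1
    refine (hsP 0 hn).ext hq0 ?_
    rw [(hs 0 hn).2.2]
    simpa using hq0.isIdempotentElem.isClosed_range.submodule_topologicalClosure_eq
  obtain ⟨hpP, horth, hsum⟩ := IsStarProjection.orthogonal_decomposition_of_chain hn hsP hs_mono
    (hp0.trans hs0.symm) fun k hk => by simpa using hpi (k + 1) k.succ_pos hk
  have hp𝔄 : ∀ i < n, p i ∈ 𝔄 := by
    rintro (_ | k) hk
    · exact hp0 ▸ (hq 0 hn).2
    · rw [hpi _ k.succ_pos hk]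
      exact sub_mem (hs _ hk).2.1 (hs _ (by omega)).2.1
  refine ⟨fun i hi => ⟨isProjectionCLM_iff.mpr (hpP i hi), hp𝔄 i hi⟩, horth, hsum, ?_⟩
  rintro hmin (_ | k) hk
  · exact hp0 ▸ hmin 0 hn
  · have hk' : k < n := by omega
    rw [hpi _ k.succ_pos hk, Nat.succ_sub_one]
    refine (hmin _ hk).sub (hsP _ hk) (hsP k hk') (hs _ hk).2.1 (hs k hk').2.1 ?_ ?_
    · rw [(hs _ hk).2.2, (hs k hk').2.2, Submodule.topologicalClosure_iSup_le_succ]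
    · simpa [(hs k hk').2.2, Nat.lt_succ_iff] using hdisj _ k.succ_pos hk
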